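/- Let T be a continuous linear operator on a topological vector space X and let x be a recurrent vector that is a finite linear combination x = Σ_{j=1}^k α_j x_j of eigenvectors x_j with distinct eigenvalues λ_j and nonzero coefficients α_j. Then |λ_j| = 1 for every j. -/

import Mathlib

variable {X : Type*} [AddCommGroup X] [Module ℂ X]
  [TopologicalSpace X] [IsTopologicalAddGroup X] [ContinuousSMul ℂ X] [T2Space X]

/-- The orbit `{Tⁿ x : n ≥ 1}` of a vector under a continuous linear operator. -/
def orbit (T : X →L[ℂ] X) (x : X) : Set X := Set.range fun n : ℕ => (T ^ (n + 1)) x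

/-- A recurrent vector that is a finite linear combination of eigenvectors with
distinct eigenvalues and nonzero coefficients forces all the eigenvalues to be
unimodular. -/
theorem recurrent_combination_of_eigenvectors_unimodular
    (T : X →L[ℂ] X) (k : ℕ) (v : Fin k → X) (lam : Fin k → ℂ) (a : Fin k → ℂ)
    (hlam : Function.Injective lam) (ha : ∀ j, a j ≠ 0) (hv : ∀ j, v j ≠ 0)
    (heig : ∀ j, T (v j) = lam j • v j)
    (x : X) (hx : x = ∑ j, a j • v j)
    (hrec : x ∈ closure (orbit T x)) :
    ∀ j, ‖lam j‖ = 1 := by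
  intro j
  have li : LinearIndependent ℂ v :=
    Module.End.eigenvectors_linearIndependent' (T : X →ₗ[ℂ] X) lam hlam v
      (fun i => ⟨Module.End.mem_eigenspace_iff.2 (heig i), hv i⟩)
  set W := Submodule.span ℂ (Set.range v) with hW
  have hFD : FiniteDimensional ℂ W := FiniteDimensional.span_of_finite ℂ (Set.finite_range v)
  have hWclosed : IsClosed (W : Set X) := W.closed_of_finiteDimensional
  -- powers of T on eigenvectors
  have hpow : ∀ (m : ℕ) (i : Fin k), (T ^ m) (v i) = lam i ^ m • v i := by
    intro m i
    induction m with
    | zero => simp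
    | succ m ih =>
        rw [pow_succ', ContinuousLinearMap.mul_apply, ih, map_smul, heig i,
          smul_smul, pow_succ]
  have horb : ∀ n : ℕ, (T ^ (n + 1)) x = ∑ i, (a i * lam i ^ (n + 1)) • v i := by
    intro n
    rw [hx, map_sum]
    refine Finset.sum_congr rfl fun i _ => ?_
    rw [map_smul, hpow, smul_smul]
  -- the orbit lies in W
  have hxW : x ∈ W := by
    rw [hx]
    exact Submodule.sum_mem _ fun i _ =>
      Submodule.smul_mem _ _ (Submodule.subset_span (Set.mem_range_self i))
  have horbW : orbit T x ⊆ (W : Set X) := by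
    rintro _ ⟨n, rfl⟩
    show (T ^ (n + 1)) x ∈ W
    rw [horb n]
    exact Submodule.sum_mem _ fun i _ =>
      Submodule.smul_mem _ _ (Submodule.subset_span (Set.mem_range_self i))
  -- pass to the subtype
  set s : Set W := Subtype.val ⁻¹' orbit T x with hs
  have himg : Subtype.val '' s = orbit T x := by
    rw [hs, Set.image_preimage_eq_inter_range, Subtype.range_coe]
    exact Set.inter_eq_left.2 horbW
  have hxcl : (⟨x, hxW⟩ : W) ∈ closure s := by
    rw [closure_subtype, himg]; exact hrec
  -- the j-th coordinate functional on W
  let phi : W →ₗ[ℂ] ℂ := (Finsupp.lapply j).comp li.repr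
  have hphi : Continuous phi := phi.continuous_of_finiteDimensional
  -- coordinates of x and of orbit points
  have hxcoord : phi ⟨x, hxW⟩ = a j := by
    have : li.repr ⟨x, hxW⟩ = Finsupp.equivFunOnFinite.symm a := by
      apply li.repr_eq
      simp [Finsupp.linearCombination_apply, Finsupp.sum_fintype, hx]
    simp [phi, this]
  have hsub : phi '' s ⊆ Set.range (fun n : ℕ => a j * lam j ^ (n + 1)) := by
    rintro _ ⟨w, hw, rfl⟩
    obtain ⟨n, hn⟩ := hw
    have hwv : (w : X) = ∑ i, (a i * lam i ^ (n + 1)) • v i := by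
      rw [← horb n]; exact hn.symm
    have : li.repr w = Finsupp.equivFunOnFinite.symm fun i => a i * lam i ^ (n + 1) := by
      apply li.repr_eq
      simp [Finsupp.linearCombination_apply, Finsupp.sum_fintype, hwv]
    exact ⟨n, by simp [phi, this]⟩
  -- a j is in the closure of the coordinate orbit
  have h1 : a j ∈ closure (Set.range fun n : ℕ => a j * lam j ^ (n + 1)) := by
    have := map_mem_closure hphi hxcl (Set.mapsTo_iff_image_subset.2 hsub)
    rwa [hxcoord] at this
  -- divide by a j and take norms: 1 ∈ closure of {‖lam j‖^(n+1)}
  have h2 : (1 : ℝ) ∈ closure (Set.range fun n : ℕ => ‖lam j‖ ^ (n + 1)) := by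
    have hcont : Continuous fun z : ℂ => ‖(a j)⁻¹ * z‖ := by continuity
    have := map_mem_closure hcont h1 (t := Set.range fun n : ℕ => ‖lam j‖ ^ (n + 1)) ?_
    · simpa [inv_mul_cancel₀ (ha j)] using this
    · rintro _ ⟨n, rfl⟩
      refine ⟨n, ?_⟩
      show ‖lam j‖ ^ (n + 1) = ‖(a j)⁻¹ * (a j * lam j ^ (n + 1))‖
      rw [← mul_assoc, inv_mul_cancel₀ (ha j), one_mul, norm_pow]
  by_contra hne
  rcases lt_or_gt_of_ne hne with hlt | hgt
  · have hle : closure (Set.range fun n : ℕ => ‖lam j‖ ^ (n + 1)) ⊆ Set.Iic ‖lam j‖ := by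
      apply closure_minimal _ isClosed_Iic
      rintro _ ⟨n, rfl⟩
      calc ‖lam j‖ ^ (n + 1) ≤ ‖lam j‖ ^ 1 :=
            pow_le_pow_of_le_one (norm_nonneg _) hlt.le (by omega)
        _ = ‖lam j‖ := pow_one _
    exact absurd (hle h2) (by simpa using hlt.not_ge)
  · have hle : closure (Set.range fun n : ℕ => ‖lam j‖ ^ (n + 1)) ⊆ Set.Ici ‖lam j‖ := by
      apply closure_minimal _ isClosed_Ici
      rintro _ ⟨n, rfl⟩
      exact le_self_pow₀ (le_of_lt hgt) (by omega)
    exact absurd (hle h2) (by simpa using hgt.not_ge)
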